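/- Let g_x, g_{p'}, g_s be positive integers, d ≥ 1 an integer, h_x, h_{p'}, h_s > 0, m ≥ m_min > 0 and s_min > 0 real numbers, and set p'_max := g_{p'}·h_{p'}. Let D be the discrete derivative operator of order 2d with periodic boundary conditions on ℂ^{ℤ/g_xℤ} with grid spacing h_x, and let M be the diagonal matrix indexed by pairs (p̂', ŝ) ∈ {0,…,g_{p'}−1}×{0,…,g_s−1} with entries M_{(p̂',ŝ),(p̂',ŝ)} = (p̂'·h_{p'})/(m·(ŝ·h_s + s_min)²). Then ‖D ⊗ M‖ ≤ (p'_max/(m_min·s_min²)) · 2·(ln d + 1)/h_x. -/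

import Mathlib

/-!
Write `D = h⁻¹ Σ_k c_{d,k} P_k`, where `P_k` is the permutation matrix of the shift
`x ↦ x + k`. Then `P_k ⊗ M` is a permutation matrix times a diagonal matrix, so its spectral
norm is at most `max |M| ≤ p'_max / (m_min s_min²)`, and the triangle inequality leaves
`Σ_k |c_{d,k}| ≤ 2 (ln d + 1)`. This follows from `|c_{d,k}| ≤ 1/|k|`, i.e.
`(d!)² ≤ (d-k)! (d+k)!` (the central binomial coefficient `C(2d, d)` is the largest), and from
`H_d ≤ 1 + ln d` for the harmonic numbers.
-/

open scoped Matrix.Norms.L2Operator Kronecker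

/-- The central finite-difference coefficients `c_{d,k}` of order `2d`:
`c_{d,k} = (-1)^(k+1) · (d!)² / (k·(d-k)!·(d+k)!)` for `k ≠ 0`, and `c_{d,0} = 0`. -/
noncomputable def centralFDCoeff (d : ℕ) (k : ℤ) : ℝ :=
  if k = 0 then 0
  else (-1 : ℝ) ^ (k + 1) * ((d.factorial : ℝ)) ^ 2 /
    ((k : ℝ) * (((d : ℤ) - k).toNat.factorial : ℝ) * (((d : ℤ) + k).toNat.factorial : ℝ))

/-- The discrete derivative operator of order `2d` with periodic boundary conditions on
`ℂ^{ℤ/gℤ}` with grid spacing `h`:  `D = (1/h)·Σ_x Σ_{k=-d}^{d} c_{d,k}·E_{x-k,x}`. -/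
noncomputable def discreteDeriv (g : ℕ) [NeZero g] (h : ℝ) (d : ℕ) :
    Matrix (ZMod g) (ZMod g) ℂ :=
  ((1 / h : ℝ) : ℂ) •
    ∑ x : ZMod g, ∑ k ∈ Finset.Icc (-(d : ℤ)) (d : ℤ),
      ((centralFDCoeff d k : ℝ) : ℂ) • Matrix.single (x - (k : ZMod g)) x (1 : ℂ)

open Finset Matrix
open scoped Nat

namespace Matrix

variable {n ι R : Type*} [Fintype n] [DecidableEq n]

theorem sum_single_sub_eq_permMatrix [AddCommGroup n] [AddCommMonoidWithOne R] (k : n) :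
    ∑ x : n, single (x - k) x (1 : R) = (Equiv.addRight k).permMatrix R := by
  ext i j
  rw [Matrix.sum_apply, sum_eq_single j]
  · simp [single_apply, eq_sub_iff_add_eq, eq_comm]
  · intro x _ hx
    simp [hx]
  · simp

theorem permMatrix_kronecker_diagonal [Fintype ι] [DecidableEq ι] [Semiring R]
    (σ : Equiv.Perm n) (v : ι → R) :
    σ.permMatrix R ⊗ₖ diagonal v =
      Equiv.Perm.permMatrix R (σ.prodCongr (Equiv.refl ι)) *
        diagonal (fun p : n × ι => v p.2) := by
  ext ⟨i, q⟩ ⟨j, r⟩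
  by_cases hqr : q = r <;> simp [kroneckerMap_apply, hqr]

theorem l2_opNorm_permMatrix_kronecker_diagonal_le [Fintype ι] [DecidableEq ι] {𝕜 : Type*}
    [RCLike 𝕜] (σ : Equiv.Perm n) (v : ι → 𝕜) :
    ‖σ.permMatrix 𝕜 ⊗ₖ diagonal v‖ ≤ ‖v‖ := by
  rw [permMatrix_kronecker_diagonal]
  calc _ ≤ ‖Equiv.Perm.permMatrix 𝕜 (σ.prodCongr (Equiv.refl ι))‖ *
          ‖diagonal (fun p : n × ι => v p.2)‖ := l2_opNorm_mul _ _
    _ ≤ 1 * ‖v‖ := by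
        gcongr
        · exact permMatrix_l2_opNorm_le _
        · rw [l2_opNorm_diagonal]
          exact pi_norm_le_iff_of_nonneg (norm_nonneg v) |>.2 fun p => norm_le_pi_norm v p.2
    _ = ‖v‖ := one_mul _

end Matrix

theorem discreteDeriv_eq_sum_permMatrix (g : ℕ) [NeZero g] (h : ℝ) (d : ℕ) :
    discreteDeriv g h d = ((1 / h : ℝ) : ℂ) • ∑ k ∈ Icc (-(d : ℤ)) d,
      (centralFDCoeff d k : ℂ) • (Equiv.addRight (k : ZMod g)).permMatrix ℂ := by
  simp only [discreteDeriv, sum_comm (s := univ), ← smul_sum,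
    sum_single_sub_eq_permMatrix]

theorem norm_discreteDeriv_kronecker_diagonal_le {ι : Type*} [Fintype ι] [DecidableEq ι]
    (g : ℕ) [NeZero g] {h : ℝ} (hh : 0 < h) (d : ℕ) (v : ι → ℂ) :
    ‖discreteDeriv g h d ⊗ₖ diagonal v‖ ≤
      (∑ k ∈ Icc (-(d : ℤ)) d, |centralFDCoeff d k|) / h * ‖v‖ := by
  have hkron : discreteDeriv g h d ⊗ₖ diagonal v = ((1 / h : ℝ) : ℂ) • ∑ k ∈ Icc (-(d : ℤ)) d,
      (centralFDCoeff d k : ℂ) • ((Equiv.addRight (k : ZMod g)).permMatrix ℂ ⊗ₖ diagonal v) := by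
    change kroneckerBilinear (R := ℂ) _ _ = _
    simp only [discreteDeriv_eq_sum_permMatrix, map_smul, map_sum, LinearMap.smul_apply,
      LinearMap.sum_apply]
    rfl
  rw [hkron, norm_smul, Complex.norm_real, Real.norm_of_nonneg (by positivity),
    one_div_mul_eq_div, div_mul_eq_mul_div, sum_mul]
  gcongr
  refine (norm_sum_le _ _).trans (sum_le_sum fun k _ => ?_)
  rw [norm_smul, Complex.norm_real, Real.norm_eq_abs]
  exact mul_le_mul_of_nonneg_left (l2_opNorm_permMatrix_kronecker_diagonal_le _ v) (abs_nonneg _)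

theorem Nat.factorial_sq_le_factorial_sub_mul_factorial_add {d j : ℕ} (hj : j ≤ d) :
    d ! ^ 2 ≤ (d - j)! * (d + j)! := by
  have hmiddle : (2 * d).choose (d - j) * ((d - j)! * (d + j)!) =
      (2 * d).choose d * d ! ^ 2 := by
    have h₁ := Nat.choose_mul_factorial_mul_factorial (n := 2 * d) (k := d - j) (by omega)
    have h₂ := Nat.choose_mul_factorial_mul_factorial (n := 2 * d) (k := d) (by omega)
    rw [show 2 * d - (d - j) = d + j by omega] at h₁
    rw [show 2 * d - d = d by omega] at h₂
    rw [sq, ← mul_assoc, ← mul_assoc, h₁, h₂]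
  have hle : (2 * d).choose (d - j) ≤ (2 * d).choose d := by
    simpa using Nat.choose_le_middle (d - j) (2 * d)
  refine Nat.le_of_mul_le_mul_left ?_ (Nat.choose_pos (by omega : d ≤ 2 * d))
  rw [← hmiddle]
  exact Nat.mul_le_mul_right _ hle

/-- Also valid at `k = 0`, where both sides vanish (`(0 : ℝ)⁻¹ = 0`). -/
theorem abs_centralFDCoeff_le {d : ℕ} {k : ℤ} (hk : |k| ≤ d) :
    |centralFDCoeff d k| ≤ |(k : ℝ)|⁻¹ := by
  rcases eq_or_ne k 0 with rfl | hk0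
  · simp [centralFDCoeff]
  have hfact : (d ! : ℝ) ^ 2 ≤ ((d - k : ℤ).toNat ! : ℝ) * ((d + k : ℤ).toNat ! : ℝ) := by
    have hj : k.natAbs ≤ d := by have := abs_le.1 hk; omega
    have := Nat.factorial_sq_le_factorial_sub_mul_factorial_add hj
    rcases le_or_gt 0 k with hpos | hneg
    · rw [show (d - k : ℤ).toNat = d - k.natAbs by omega,
        show (d + k : ℤ).toNat = d + k.natAbs by omega]
      exact_mod_cast this
    · rw [show (d - k : ℤ).toNat = d + k.natAbs by omega,
        show (d + k : ℤ).toNat = d - k.natAbs by omega, mul_comm]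
      exact_mod_cast this
  have hk' : 0 < |(k : ℝ)| := by positivity
  rw [centralFDCoeff, if_neg hk0, abs_div, abs_mul, abs_zpow, abs_neg, abs_one, _root_.one_zpow,
    one_mul, abs_mul, abs_mul, abs_pow, Nat.abs_cast, Nat.abs_cast, Nat.abs_cast, mul_assoc,
    div_le_iff₀ (by positivity), inv_mul_cancel_left₀ hk'.ne']
  exact hfact

theorem sum_Icc_abs_inv (n : ℕ) : ∑ k ∈ Icc (-(n : ℤ)) n, |(k : ℝ)|⁻¹ = 2 * harmonic n := by
  induction n with
  | zero => simp
  | succ n ih =>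
    have hIcc : Icc (-((n + 1 : ℕ) : ℤ)) (n + 1 : ℕ) =
        insert (-((n + 1 : ℕ) : ℤ)) (insert ((n + 1 : ℕ) : ℤ) (Icc (-(n : ℤ)) n)) := by
      ext k
      simp only [mem_Icc, mem_insert]
      omega
    rw [hIcc, sum_insert (by simp; omega), sum_insert (by simp), ih, harmonic_succ]
    push_cast
    rw [abs_neg, abs_of_pos (by positivity)]
    ring

theorem sum_abs_centralFDCoeff_le (d : ℕ) :
    ∑ k ∈ Icc (-(d : ℤ)) d, |centralFDCoeff d k| ≤ 2 * (Real.log d + 1) := by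
  calc ∑ k ∈ Icc (-(d : ℤ)) d, |centralFDCoeff d k|
      ≤ ∑ k ∈ Icc (-(d : ℤ)) d, |(k : ℝ)|⁻¹ :=
        sum_le_sum fun k hk => abs_centralFDCoeff_le (abs_le.2 (mem_Icc.1 hk))
    _ = 2 * harmonic d := sum_Icc_abs_inv d
    _ ≤ 2 * (Real.log d + 1) := by
        linarith [harmonic_le_one_add_log d]

theorem kinetic_NVT_norm_le_general (gx gp' gs : ℕ) [NeZero gx]
    (d : ℕ) (hx hp' hs : ℝ) (hhx : 0 < hx) (hhp' : 0 < hp') (hhs : 0 < hs)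
    (m mmin smin : ℝ) (hm : mmin ≤ m) (hmmin : 0 < mmin) (hsmin : 0 < smin) :
    ‖discreteDeriv gx hx d ⊗ₖ
        Matrix.diagonal (fun q : Fin gp' × Fin gs =>
          (((q.1 : ℕ) * hp' / (m * ((q.2 : ℕ) * hs + smin) ^ 2) : ℝ) : ℂ))‖ ≤
      (gp' * hp' / (mmin * smin ^ 2)) * (2 * (Real.log d + 1) / hx) := by
  have hm0 : 0 < m := hmmin.trans_le hm
  set B : ℝ := gp' * hp' / (mmin * smin ^ 2) with hB_def
  have hB : 0 ≤ B := hB_def ▸ by positivity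
  have hentry (q : Fin gp' × Fin gs) :
      ‖(((q.1 : ℕ) * hp' / (m * ((q.2 : ℕ) * hs + smin) ^ 2) : ℝ) : ℂ)‖ ≤ B := by
    rw [Complex.norm_real, Real.norm_of_nonneg (by positivity), hB_def]
    gcongr
    · exact q.1.is_lt.le
    · exact le_add_of_nonneg_left (by positivity)
  calc _ ≤ (∑ k ∈ Icc (-(d : ℤ)) d, |centralFDCoeff d k|) / hx * B :=
        (norm_discreteDeriv_kronecker_diagonal_le gx hhx d _).trans <|
          mul_le_mul_of_nonneg_left ((pi_norm_le_iff_of_nonneg hB).2 hentry) (by positivity)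
    _ ≤ 2 * (Real.log d + 1) / hx * B := by
        gcongr
        exact sum_abs_centralFDCoeff_le d
    _ = B * (2 * (Real.log d + 1) / hx) := mul_comm _ _

/-- **Spectral norm bound on the NVT kinetic Liouvillian term** `K^{(NVT)}_{n,j} = D ⊗ M`, with
`M` the diagonal matrix `p̂'·h_{p'}/(m·(ŝ·h_s + s_min)²)` indexed by momentum-bath pairs:
`‖D ⊗ M‖ ≤ (p'_max/(m_min·s_min²))·2·(ln d + 1)/h_x` where `p'_max = g_{p'}·h_{p'}`. -/
theorem kinetic_NVT_norm_le (gx gp' gs : ℕ) [NeZero gx] (hgp' : 0 < gp') (hgs : 0 < gs)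
    (d : ℕ) (hd : 1 ≤ d) (hx hp' hs : ℝ) (hhx : 0 < hx) (hhp' : 0 < hp') (hhs : 0 < hs)
    (m mmin smin : ℝ) (hm : mmin ≤ m) (hmmin : 0 < mmin) (hsmin : 0 < smin) :
    ‖discreteDeriv gx hx d ⊗ₖ
        Matrix.diagonal (fun q : Fin gp' × Fin gs =>
          (((q.1 : ℕ) * hp' / (m * ((q.2 : ℕ) * hs + smin) ^ 2) : ℝ) : ℂ))‖ ≤
      (gp' * hp' / (mmin * smin ^ 2)) * (2 * (Real.log d + 1) / hx) :=
  kinetic_NVT_norm_le_general gx gp' gs d hx hp' hs hhx hhp' hhs m mmin smin hm hmmin hsmin
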